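/- arXiv:2401.05027 — 3 statements merged into one kernel-verified Lean document; each statement's English description precedes it below -/
import Mathlib

section
/- Let α, β ∈ ℝ \ ℚ, 0 < γ < 1, 0 < ε < 1/2 and T > e. Assume that m_{ℝ²}({ (s,t) ∈ [0,T]² : there exists v ∈ ℤ³ \ {0} with ‖a_{s,t}·τ_{α,β}·v‖_∞ ≤ ε }) ≥ γ·T², where m_{ℝ²} is the Lebesgue measure on ℝ². Then ((log T)²/T²) · #{ n ∈ ℕ : n < e^{2T} and n·⟨nα⟩·⟨nβ⟩ ≤ ε³ } ≥ γ/18. -/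
open Filter MeasureTheory Matrix

/-- `⟨x⟩`: the distance from `x` to the nearest integer. -/
noncomputable def nearInt (x : ℝ) : ℝ := ⨅ m : ℤ, |x - (m : ℝ)|

/-- The matrix `a_{s,t} = diag(e^{-s-t}, e^s, e^t)`. -/
noncomputable def aMat (s t : ℝ) : Matrix (Fin 3) (Fin 3) ℝ :=
  Matrix.diagonal ![Real.exp (-s - t), Real.exp s, Real.exp t]

/-- `τ_{α,β}`: the lower triangular unipotent matrix with rows (1,0,0), (α,1,0), (β,0,1). -/
def tauMat (α β : ℝ) : Matrix (Fin 3) (Fin 3) ℝ :=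
  Matrix.of ![![1, 0, 0], ![α, 1, 0], ![β, 0, 1]]

/-!
A point `(s, t) ∈ [0, T]²` with a nonzero `v ∈ ℤ³` such that `‖a_{s,t} τ_{α,β} v‖_∞ ≤ ε` yields
`n = |v₀|` with `n ≤ ε e^{s+t}`, `e^s ⟨nα⟩ ≤ ε` and `e^t ⟨nβ⟩ ≤ ε`; such an `n` is counted.
For fixed `n` these conditions cut out of `{s, t ≤ T}` a right isosceles triangle, of side at most
`log (ε³ / (n ⟨nα⟩ ⟨nβ⟩))` and at most `2T - log (n / ε)`. If all these sides are `< 6 log T`,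
each triangle has area `< 18 (log T)²`, and covering a set of measure `≥ γ T²` needs
`γ T² / (18 (log T)²)` of them. Otherwise some counted `n` has `n ⟨nα⟩ ⟨nβ⟩ ≤ ε³ / T⁶` and
`n ≤ ε e^{2T} / T⁶`, and then all multiples `k n` with `k ≤ T²` are counted, since
`⟨k x⟩ ≤ k ⟨x⟩`.
-/
open Real Set

lemma nearInt_eq_abs_sub_round (x : ℝ) : nearInt x = |x - round x| :=
  le_antisymm (ciInf_le ⟨0, by rintro _ ⟨m, rfl⟩; positivity⟩ _) (le_ciInf (round_le x))

lemma nearInt_le_abs_sub (x : ℝ) (m : ℤ) : nearInt x ≤ |x - m| :=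
  nearInt_eq_abs_sub_round x ▸ round_le x m

lemma nearInt_nonneg (x : ℝ) : 0 ≤ nearInt x :=
  nearInt_eq_abs_sub_round x ▸ abs_nonneg _

lemma nearInt_neg_le (x : ℝ) : nearInt (-x) ≤ nearInt x :=
  le_ciInf fun m => by
    have h := nearInt_le_abs_sub (-x) (-m)
    rwa [show -x - ((-m : ℤ) : ℝ) = -(x - m) by push_cast; ring, abs_neg] at h

lemma nearInt_neg (x : ℝ) : nearInt (-x) = nearInt x :=
  le_antisymm (nearInt_neg_le x) (by simpa using nearInt_neg_le (-x))

lemma nearInt_natAbs_mul (k : ℤ) (x : ℝ) : nearInt (k.natAbs * x) = nearInt (k * x) := by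
  rw [Nat.cast_natAbs, Int.cast_abs]
  rcases abs_choice (k : ℝ) with h | h <;> rw [h]
  rw [neg_mul, nearInt_neg]

lemma nearInt_nat_mul_le (k : ℕ) (x : ℝ) : nearInt (k * x) ≤ k * nearInt x := by
  calc nearInt (k * x) ≤ |k * x - ((k * round x : ℤ) : ℝ)| := nearInt_le_abs_sub _ _
    _ = k * nearInt x := by
      push_cast; rw [← mul_sub, abs_mul, Nat.abs_cast, nearInt_eq_abs_sub_round]

lemma Irrational.nearInt_pos {x : ℝ} (h : Irrational x) : 0 < nearInt x := by
  rw [nearInt_eq_abs_sub_round]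
  exact abs_pos.2 (sub_ne_zero.2 (h.ne_int _))

lemma aMat_mul_tauMat_mulVec (s t α β : ℝ) (w : Fin 3 → ℝ) :
    (aMat s t * tauMat α β) *ᵥ w =
      ![exp (-s - t) * w 0, exp s * (α * w 0 + w 1), exp t * (β * w 0 + w 2)] := by
  ext i
  fin_cases i <;>
    simp [aMat, tauMat, Matrix.mulVec, Matrix.mul_apply, dotProduct, Fin.sum_univ_three] <;> ring

lemma nearInt_natAbs_mul_le (k m : ℤ) (x : ℝ) : nearInt (k.natAbs * x) ≤ |x * k + m| := by
  rw [nearInt_natAbs_mul]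
  simpa [mul_comm] using nearInt_le_abs_sub (k * x) (-m)

lemma exists_nat_witness_of_norm_le {α β ε s t : ℝ} (hε : ε < 1) (hs : 0 ≤ s) (ht : 0 ≤ t)
    {v : Fin 3 → ℤ} (hv : v ≠ 0)
    (h : ‖(aMat s t * tauMat α β) *ᵥ (fun i => (v i : ℝ))‖ ≤ ε) :
    ∃ n : ℕ, 0 < n ∧ (n : ℝ) ≤ ε * exp (s + t) ∧
      exp s * nearInt (n * α) ≤ ε ∧ exp t * nearInt (n * β) ≤ ε := by
  have hcoord i := (norm_le_pi_norm _ i).trans h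
  have h0 := hcoord 0
  have h1 := hcoord 1
  have h2 := hcoord 2
  simp only [aMat_mul_tauMat_mulVec, Matrix.cons_val, Real.norm_eq_abs, abs_mul, abs_exp]
    at h0 h1 h2
  have hv0 : v 0 ≠ 0 := by
    intro hv0
    have small : ∀ (r : ℝ) (z : ℤ), 0 ≤ r → exp r * |(z : ℝ)| ≤ ε → z = 0 := fun r z hr hz => by
      rw [← Int.abs_lt_one_iff, ← Int.cast_lt (R := ℝ), Int.cast_abs, Int.cast_one]
      exact (le_mul_of_one_le_left (abs_nonneg _) (one_le_exp hr)).trans_lt (hz.trans_lt hε)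
    refine hv (funext fun i => ?_)
    fin_cases i
    · exact hv0
    · exact small s _ hs (by simpa [hv0] using h1)
    · exact small t _ ht (by simpa [hv0] using h2)
  refine ⟨(v 0).natAbs, Int.natAbs_pos.2 hv0, ?_, ?_, ?_⟩
  · rw [show -s - t = -(s + t) by ring, Real.exp_neg, inv_mul_le_iff₀ (exp_pos _)] at h0
    simpa [mul_comm] using h0
  · exact (mul_le_mul_of_nonneg_left (nearInt_natAbs_mul_le _ (v 1) α) (exp_pos s).le).trans h1
  · exact (mul_le_mul_of_nonneg_left (nearInt_natAbs_mul_le _ (v 2) β) (exp_pos t).le).trans h2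

def approxSet (α β δ X : ℝ) : Set ℕ :=
  {n | 0 < n ∧ (n : ℝ) < X ∧ (n : ℝ) * nearInt (n * α) * nearInt (n * β) ≤ δ}

lemma approxSet_finite (α β δ X : ℝ) : (approxSet α β δ X).Finite :=
  (finite_Iio ⌈X⌉₊).subset fun _ hn => Nat.lt_ceil.2 hn.2.1

lemma le_ncard_approxSet {α β δ X : ℝ} {m n : ℕ} (hn : 0 < n) (hX : (m * n : ℝ) < X)
    (hδ : (m : ℝ) ^ 3 * (n * nearInt (n * α) * nearInt (n * β)) ≤ δ) :
    m ≤ (approxSet α β δ X).ncard := by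
  have hmul : ∀ k ∈ Finset.Icc 1 m, k * n ∈ approxSet α β δ X := by
    intro k hk
    obtain ⟨hk1, hkm⟩ := Finset.mem_Icc.1 hk
    have hkm' : (k : ℝ) ≤ m := by exact_mod_cast hkm
    refine ⟨Nat.mul_pos hk1 hn, ?_, ?_⟩
    · push_cast
      exact (mul_le_mul_of_nonneg_right hkm' n.cast_nonneg).trans_lt hX
    · calc ((k * n : ℕ) : ℝ) * nearInt ((k * n : ℕ) * α) * nearInt ((k * n : ℕ) * β)
          ≤ (k * n) * (k * nearInt (n * α)) * (k * nearInt (n * β)) := by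
            rw [show ((k * n : ℕ) : ℝ) * α = k * (n * α) by push_cast; ring,
              show ((k * n : ℕ) : ℝ) * β = k * (n * β) by push_cast; ring, Nat.cast_mul]
            exact mul_le_mul (mul_le_mul_of_nonneg_left (nearInt_nat_mul_le k _) (by positivity))
              (nearInt_nat_mul_le k _) (nearInt_nonneg _)
              (mul_nonneg (by positivity) (mul_nonneg k.cast_nonneg (nearInt_nonneg _)))
        _ = (k : ℝ) ^ 3 * (n * nearInt (n * α) * nearInt (n * β)) := by ring
        _ ≤ δ := by
            refine le_trans ?_ hδ
            gcongr
            exact mul_nonneg (mul_nonneg n.cast_nonneg (nearInt_nonneg _)) (nearInt_nonneg _)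
  calc m = ((Finset.Icc 1 m).image (· * n)).card := by
        rw [Finset.card_image_of_injective _ (mul_left_injective₀ hn.ne'), Nat.card_Icc,
          Nat.add_sub_cancel]
    _ ≤ (approxSet α β δ X).ncard := by
        rw [← ncard_coe_finset]
        refine ncard_le_ncard ?_ (approxSet_finite α β δ X)
        rw [Finset.coe_image]
        exact image_subset_iff.2 hmul

lemma volume_triangle {A B C : ℝ} (h : A ≤ B + C) :
    volume {p : ℝ × ℝ | A ≤ p.1 + p.2 ∧ p.1 ≤ B ∧ p.2 ≤ C} =
      ENNReal.ofReal ((B + C - A) ^ 2 / 2) := by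
  set S := {p : ℝ × ℝ | A ≤ p.1 + p.2 ∧ p.1 ≤ B ∧ p.2 ≤ C}
  have hS : MeasurableSet S := by
    simp only [S, ofPred_and]
    exact (measurableSet_le measurable_const (by fun_prop)).inter
      ((measurableSet_le measurable_fst measurable_const).inter
        (measurableSet_le measurable_snd measurable_const))
  have hslice x : volume (Prod.mk x ⁻¹' S) =
      (Icc (A - C) B).indicator (fun x => ENNReal.ofReal (x - (A - C))) x := by
    by_cases hx : x ∈ Icc (A - C) B
    · have : Prod.mk x ⁻¹' S = Icc (A - x) C := by
        ext y; simp only [S, mem_preimage, mem_ofPred_eq, mem_Icc, hx.2, true_and]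
        constructor <;> rintro ⟨h1, h2⟩ <;> constructor <;> linarith
      rw [indicator_of_mem hx, this, Real.volume_Icc]
      ring_nf
    · have : Prod.mk x ⁻¹' S = ∅ := by
        ext y; simp only [S, mem_preimage, mem_ofPred_eq, mem_empty_iff_false, iff_false]
        rintro ⟨h1, h2, h3⟩; exact hx ⟨by linarith, h2⟩
      rw [indicator_of_notMem hx, this, measure_empty]
  rw [Measure.volume_eq_prod, Measure.prod_apply hS]
  simp_rw [hslice]
  rw [lintegral_indicator measurableSet_Icc, ← ofReal_integral_eq_lintegral_ofReal,
    integral_Icc_eq_integral_Ioc, ← intervalIntegral.integral_of_le (by linarith),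
    intervalIntegral.integral_comp_sub_right fun x => x, integral_id]
  · ring_nf
  · exact (continuous_id.sub continuous_const).integrableOn_Icc
  · filter_upwards [ae_restrict_mem measurableSet_Icc] with x hx
    exact sub_nonneg.2 hx.1

lemma volume_triangle_le {A B C K : ℝ} (hK : 0 ≤ K) (h : B + C - A ≤ K) :
    volume {p : ℝ × ℝ | A ≤ p.1 + p.2 ∧ p.1 ≤ B ∧ p.2 ≤ C} ≤ ENNReal.ofReal (K ^ 2 / 2) := by
  calc volume {p : ℝ × ℝ | A ≤ p.1 + p.2 ∧ p.1 ≤ B ∧ p.2 ≤ C}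
      ≤ volume {p : ℝ × ℝ | B + C - K ≤ p.1 + p.2 ∧ p.1 ≤ B ∧ p.2 ≤ C} :=
        measure_mono fun p ⟨h1, h2⟩ => ⟨by linarith, h2⟩
    _ = ENNReal.ofReal (K ^ 2 / 2) := by rw [volume_triangle (by linarith)]; ring_nf

def witnessRegion (α β ε T : ℝ) (n : ℕ) : Set (ℝ × ℝ) :=
  {p | p.1 ≤ T ∧ p.2 ≤ T ∧ (n : ℝ) ≤ ε * exp (p.1 + p.2) ∧
    exp p.1 * nearInt (n * α) ≤ ε ∧ exp p.2 * nearInt (n * β) ≤ ε}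

lemma mem_approxSet_of_mem_witnessRegion {α β ε T : ℝ} {n : ℕ} {p : ℝ × ℝ} (hε : ε < 1)
    (hn : 0 < n) (hp : p ∈ witnessRegion α β ε T n) :
    n ∈ approxSet α β (ε ^ 3) (exp (2 * T)) := by
  obtain ⟨hsT, htT, hn_le, ha, hb⟩ := hp
  have hn' : (0 : ℝ) < n := by exact_mod_cast hn
  have hε0 : 0 < ε := pos_of_mul_pos_left (hn'.trans_le hn_le) (exp_pos _).le
  refine ⟨hn, ?_, ?_⟩
  · calc (n : ℝ) ≤ ε * exp (p.1 + p.2) := hn_le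
      _ < 1 * exp (2 * T) := mul_lt_mul hε (exp_le_exp.2 (by linarith)) (exp_pos _) zero_le_one
      _ = exp (2 * T) := one_mul _
  · refine le_of_mul_le_mul_right ?_ (exp_pos (p.1 + p.2))
    calc (n : ℝ) * nearInt (n * α) * nearInt (n * β) * exp (p.1 + p.2)
        = n * (exp p.1 * nearInt (n * α)) * (exp p.2 * nearInt (n * β)) := by
          rw [exp_add]; ring
      _ ≤ (ε * exp (p.1 + p.2)) * ε * ε := by
          gcongr <;> exact mul_nonneg (exp_pos _).le (nearInt_nonneg _)
      _ = ε ^ 3 * exp (p.1 + p.2) := by ring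

def shortVectorSet (α β ε T : ℝ) : Set (ℝ × ℝ) :=
  {p | p.1 ∈ Icc 0 T ∧ p.2 ∈ Icc 0 T ∧ ∃ v : Fin 3 → ℤ, v ≠ 0 ∧
    ‖(aMat p.1 p.2 * tauMat α β) *ᵥ (fun i => (v i : ℝ))‖ ≤ ε}

lemma shortVectorSet_subset_biUnion_witnessRegion {α β ε T : ℝ} (hε : ε < 1) :
    shortVectorSet α β ε T ⊆
      ⋃ n ∈ approxSet α β (ε ^ 3) (exp (2 * T)), witnessRegion α β ε T n := by
  rintro p ⟨⟨hs0, hsT⟩, ⟨ht0, htT⟩, v, hv, hnorm⟩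
  obtain ⟨n, hn, hn_le, ha, hb⟩ := exists_nat_witness_of_norm_le hε hs0 ht0 hv hnorm
  have hp : p ∈ witnessRegion α β ε T n := ⟨hsT, htT, hn_le, ha, hb⟩
  exact mem_biUnion (mem_approxSet_of_mem_witnessRegion hε hn hp) hp

lemma volume_witnessRegion_le {α β ε T K : ℝ} {n : ℕ} (hK : 0 ≤ K) (hε : 0 < ε) (hn : 0 < n)
    (ha : 0 < nearInt (n * α)) (hb : 0 < nearInt (n * β))
    (h : ε ^ 3 < exp K * (n * nearInt (n * α) * nearInt (n * β)) ∨
      ε * exp (2 * T) < exp K * n) :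
    volume (witnessRegion α β ε T n) ≤ ENNReal.ofReal (K ^ 2 / 2) := by
  have hn' : (0 : ℝ) < n := by exact_mod_cast hn
  have hA p (hp : p ∈ witnessRegion α β ε T n) : log (n / ε) ≤ p.1 + p.2 :=
    (log_le_iff_le_exp (by positivity)).2 ((div_le_iff₀' hε).2 hp.2.2.1)
  have hB p (hp : p ∈ witnessRegion α β ε T n) : p.1 ≤ log (ε / nearInt (n * α)) :=
    (le_log_iff_exp_le (by positivity)).2 ((le_div_iff₀ ha).2 hp.2.2.2.1)
  have hC p (hp : p ∈ witnessRegion α β ε T n) : p.2 ≤ log (ε / nearInt (n * β)) :=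
    (le_log_iff_exp_le (by positivity)).2 ((le_div_iff₀ hb).2 hp.2.2.2.2)
  rcases h with h | h
  · refine (measure_mono ?_).trans (volume_triangle_le (A := log (n / ε))
      (B := log (ε / nearInt (n * α))) (C := log (ε / nearInt (n * β))) hK ?_)
    · exact fun p hp => ⟨hA p hp, hB p hp, hC p hp⟩
    rw [← log_mul (by positivity) (by positivity), ← log_div (by positivity) (by positivity),
      log_le_iff_le_exp (by positivity), div_le_iff₀ (by positivity)]
    field_simp
    linarith
  · refine (measure_mono ?_).trans (volume_triangle_le (A := log (n / ε)) (B := T) (C := T) hK ?_)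
    · exact fun p hp => ⟨hA p hp, hp.1, hp.2.1⟩
    rw [sub_le_iff_le_add, ← sub_le_iff_le_add', le_log_iff_exp_le (by positivity),
      le_div_iff₀ hε]
    rw [show T + T - K = 2 * T - K by ring, exp_sub, div_mul_eq_mul_div, div_le_iff₀ (exp_pos _)]
    linarith

lemma measure_biUnion_le_ncard_mul {ι α : Type*} [MeasurableSpace α] (μ : Measure α) {s : Set ι}
    (hs : s.Finite) (f : ι → Set α) {c : ENNReal} (h : ∀ i ∈ s, μ (f i) ≤ c) :
    μ (⋃ i ∈ s, f i) ≤ s.ncard * c := by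
  calc μ (⋃ i ∈ s, f i) = μ (⋃ i ∈ hs.toFinset, f i) := by simp
    _ ≤ ∑ i ∈ hs.toFinset, μ (f i) := measure_biUnion_finset_le _ _
    _ ≤ hs.toFinset.card • c := Finset.sum_le_card_nsmul _ _ _ fun i hi => h i (by simpa using hi)
    _ = s.ncard * c := by rw [nsmul_eq_mul, ncard_eq_toFinset_card s hs]

lemma volume_shortVectorSet_le {α β ε T : ℝ} (hα : Irrational α) (hβ : Irrational β)
    (hε0 : 0 < ε) (hε1 : ε < 1) (hT : 1 ≤ T)
    (hsparse : ∀ n ∈ approxSet α β (ε ^ 3) (exp (2 * T)),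
      ε ^ 3 < T ^ 6 * (n * nearInt (n * α) * nearInt (n * β)) ∨ ε * exp (2 * T) < T ^ 6 * n) :
    volume (shortVectorSet α β ε T) ≤
      (approxSet α β (ε ^ 3) (exp (2 * T))).ncard * ENNReal.ofReal (18 * log T ^ 2) := by
  have hK : exp (6 * log T) = T ^ 6 := by
    rw [mul_comm, exp_mul, exp_log (by linarith), rpow_ofNat]
  refine (measure_mono (shortVectorSet_subset_biUnion_witnessRegion hε1)).trans
    (measure_biUnion_le_ncard_mul _ (approxSet_finite _ _ _ _) _ fun n hn => ?_)
  have hn0 : n ≠ 0 := hn.1.ne'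
  convert volume_witnessRegion_le (K := 6 * log T) (by linarith [log_nonneg hT]) hε0 hn.1
    (hα.natCast_mul hn0).nearInt_pos (hβ.natCast_mul hn0).nearInt_pos (hK ▸ hsparse n hn) using 2
  ring

lemma floor_sq_le_ncard_approxSet {α β ε T : ℝ} {n : ℕ} (hT : 1 < T) (hε : ε < 1) (hn : 0 < n)
    (hprod : T ^ 6 * (n * nearInt (n * α) * nearInt (n * β)) ≤ ε ^ 3)
    (hsize : T ^ 6 * n ≤ ε * exp (2 * T)) :
    ⌊T ^ 2⌋₊ ≤ (approxSet α β (ε ^ 3) (exp (2 * T))).ncard := by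
  have hm : (⌊T ^ 2⌋₊ : ℝ) ≤ T ^ 2 := Nat.floor_le (by positivity)
  apply le_ncard_approxSet hn
  · have hT4 : 1 ≤ T ^ 4 := one_le_pow₀ hT.le
    refine (mul_le_mul_of_nonneg_right hm n.cast_nonneg).trans_lt
      (lt_of_mul_lt_mul_left ?_ (by positivity : (0 : ℝ) ≤ T ^ 4))
    calc T ^ 4 * (T ^ 2 * n) = T ^ 6 * n := by ring
      _ < 1 * exp (2 * T) := hsize.trans_lt (mul_lt_mul_of_pos_right hε (exp_pos _))
      _ ≤ T ^ 4 * exp (2 * T) := mul_le_mul_of_nonneg_right hT4 (exp_pos _).le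
  · refine le_trans ?_ hprod
    have : (⌊T ^ 2⌋₊ : ℝ) ^ 3 ≤ T ^ 6 := by
      simpa [← pow_mul] using pow_le_pow_left₀ (Nat.cast_nonneg _) hm 3
    exact mul_le_mul_of_nonneg_right this
      (mul_nonneg (mul_nonneg n.cast_nonneg (nearInt_nonneg _)) (nearInt_nonneg _))

theorem stmt7_general (α β : ℝ) (hα : Irrational α) (hβ : Irrational β)
    (γ : ℝ) (hγ1 : γ < 1) (ε : ℝ) (hε0 : 0 < ε) (hε1 : ε < 1 / 2)
    (T : ℝ) (hT : Real.exp 1 < T)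
    (hmass : ENNReal.ofReal (γ * T ^ 2) ≤
      volume {p : ℝ × ℝ | p.1 ∈ Set.Icc 0 T ∧ p.2 ∈ Set.Icc 0 T ∧
        ∃ v : Fin 3 → ℤ, v ≠ 0 ∧
          ‖(aMat p.1 p.2 * tauMat α β).mulVec (fun i => (v i : ℝ))‖ ≤ ε}) :
    γ / 18 ≤
      (Real.log T) ^ 2 / T ^ 2 *
        ({n : ℕ | 0 < n ∧ (n : ℝ) < Real.exp (2 * T) ∧
          (n : ℝ) * nearInt (n * α) * nearInt (n * β) ≤ ε ^ 3}.ncard : ℝ) := by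
  have hT2 : 2 < T := (by linarith [add_one_lt_exp one_ne_zero] : (2 : ℝ) < exp 1).trans hT
  have hL : 1 < log T := (lt_log_iff_exp_lt (by linarith)).2 hT
  have hε : ε < 1 := by linarith
  change γ / 18 ≤ log T ^ 2 / T ^ 2 * ((approxSet α β (ε ^ 3) (exp (2 * T))).ncard : ℝ)
  rw [div_mul_eq_mul_div, le_div_iff₀ (by positivity)]
  by_cases hdense : ∃ n ∈ approxSet α β (ε ^ 3) (exp (2 * T)),
      T ^ 6 * (n * nearInt (n * α) * nearInt (n * β)) ≤ ε ^ 3 ∧ T ^ 6 * n ≤ ε * exp (2 * T)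
  · obtain ⟨n, hn, hprod, hsize⟩ := hdense
    have hfloor := floor_sq_le_ncard_approxSet (by linarith) hε hn.1 hprod hsize
    have hcard : T ^ 2 - 1 < (approxSet α β (ε ^ 3) (exp (2 * T))).ncard :=
      (Nat.sub_one_lt_floor _).trans_le (by exact_mod_cast hfloor)
    nlinarith [mul_le_mul_of_nonneg_right (one_lt_pow₀ hL two_ne_zero).le
      (by nlinarith : (0 : ℝ) ≤ T ^ 2 - 1)]
  · push Not at hdense
    have hvol := hmass.trans (volume_shortVectorSet_le hα hβ hε0 hε (by linarith) fun n hn =>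
      (lt_or_ge _ _).imp_right (hdense n hn))
    rw [← ENNReal.ofReal_natCast, ← ENNReal.ofReal_mul (by positivity),
      ENNReal.ofReal_le_ofReal_iff (by positivity)] at hvol
    linarith

theorem stmt7 (α β : ℝ) (hα : Irrational α) (hβ : Irrational β)
    (γ : ℝ) (hγ0 : 0 < γ) (hγ1 : γ < 1) (ε : ℝ) (hε0 : 0 < ε) (hε1 : ε < 1 / 2)
    (T : ℝ) (hT : Real.exp 1 < T)
    (hmass : ENNReal.ofReal (γ * T ^ 2) ≤
      volume {p : ℝ × ℝ | p.1 ∈ Set.Icc 0 T ∧ p.2 ∈ Set.Icc 0 T ∧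
        ∃ v : Fin 3 → ℤ, v ≠ 0 ∧
          ‖(aMat p.1 p.2 * tauMat α β).mulVec (fun i => (v i : ℝ))‖ ≤ ε}) :
    γ / 18 ≤
      (Real.log T) ^ 2 / T ^ 2 *
        ({n : ℕ | 0 < n ∧ (n : ℝ) < Real.exp (2 * T) ∧
          (n : ℝ) * nearInt (n * α) * nearInt (n * β) ≤ ε ^ 3}.ncard : ℝ) :=
  stmt7_general α β hα hβ γ hγ1 ε hε0 hε1 T hT hmass
end

section
/- Let 0 < ε < 1 and T > 1. The sets a_{m,n}^{−1}·Δ_ε, for (m,n) ranging over ℤ_{≥0}², are pairwise disjoint, and the union of a_{m,n}^{−1}·Δ_ε over all integers m, n with 0 ≤ m, n ≤ ⌊T⌋ is contained in Ω_{T,ε}. -/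
open Filter MeasureTheory Matrix

/-- `Ω_{T,ε} = {(y,x₁,x₂) : 0 < y < e^{2T}, 0 < |x₁| < 1/2, 0 < |x₂| < 1/2, y|x₁||x₂| < ε}`. -/
def Omega (T ε : ℝ) : Set (Fin 3 → ℝ) :=
  {w | 0 < w 0 ∧ w 0 < Real.exp (2 * T) ∧ 0 < |w 1| ∧ |w 1| < 1 / 2 ∧
    0 < |w 2| ∧ |w 2| < 1 / 2 ∧ w 0 * |w 1| * |w 2| < ε}

/-- `Δ_ε = {(y,x₁,x₂) : 0 < y < 1, 1/(2e) < |x₁| < 1/2, 1/(2e) < |x₂| < 1/2, y|x₁||x₂| < ε}`. -/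
noncomputable def Delta (ε : ℝ) : Set (Fin 3 → ℝ) :=
  {w | 0 < w 0 ∧ w 0 < 1 ∧ 1 / (2 * Real.exp 1) < |w 1| ∧ |w 1| < 1 / 2 ∧
    1 / (2 * Real.exp 1) < |w 2| ∧ |w 2| < 1 / 2 ∧ w 0 * |w 1| * |w 2| < ε}

/-!
Since `a_{s,t}` is diagonal, `v ∈ a_{s,t}⁻¹ Δ_ε` says that `e^{-s-t} v₀ ∈ (0,1)`,
`e^s |v₁|, e^t |v₂| ∈ (1/(2e), 1/2)` and `v₀ |v₁| |v₂| < ε` (the determinant is `1`).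
The shells `e^s |x| ∈ (1/(2e), 1/2)` for `s` and `s'` can only meet when `|s - s'| < 1`,
which forces equal integer parameters; and for `s, t ≥ 0` with `s + t ≤ 2T` these bounds
imply the cruder ones defining `Ω_{T,ε}`.
-/

open Real Matrix Set

lemma Matrix.image_inv_mulVec_eq_preimage {n R : Type*} [Fintype n] [DecidableEq n] [CommRing R]
    {A : Matrix n n R} (hA : IsUnit A.det) (S : Set (n → R)) :
    (fun w => A⁻¹ *ᵥ w) '' S = (fun v => A *ᵥ v) ⁻¹' S :=
  congrFun (image_eq_preimage_of_inverse
    (fun v => by simp only [mulVec_mulVec, mul_nonsing_inv _ hA, one_mulVec])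
    (fun v => by simp only [mulVec_mulVec, nonsing_inv_mul _ hA, one_mulVec])) S

lemma det_aMat (s t : ℝ) : (aMat s t).det = 1 := by
  simp [aMat, Fin.prod_univ_three, ← exp_add]
  ring

lemma aMat_mulVec (s t : ℝ) (v : Fin 3 → ℝ) :
    aMat s t *ᵥ v = ![exp (-s - t) * v 0, exp s * v 1, exp t * v 2] := by
  ext i
  fin_cases i <;> simp [aMat, mulVec_diagonal]

lemma mem_aMat_inv_image_Delta_iff {s t ε : ℝ} {v : Fin 3 → ℝ} :
    v ∈ (fun w => (aMat s t)⁻¹ *ᵥ w) '' Delta ε ↔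
      (0 < exp (-s - t) * v 0 ∧ exp (-s - t) * v 0 < 1) ∧
      (1 / (2 * exp 1) < exp s * |v 1| ∧ exp s * |v 1| < 1 / 2) ∧
      (1 / (2 * exp 1) < exp t * |v 2| ∧ exp t * |v 2| < 1 / 2) ∧
      v 0 * |v 1| * |v 2| < ε := by
  have hdet : IsUnit (aMat s t).det := by simp [det_aMat]
  have hprod : exp (-s - t) * v 0 * (exp s * |v 1|) * (exp t * |v 2|) = v 0 * |v 1| * |v 2| := by
    rw [show exp (-s - t) = (exp s * exp t)⁻¹ by rw [← exp_add, ← exp_neg, neg_add']]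
    field_simp
  rw [image_inv_mulVec_eq_preimage hdet, mem_preimage, aMat_mulVec]
  simp only [Delta, mem_ofPred_eq, Matrix.cons_val_zero, Matrix.cons_val_one, Matrix.cons_val_two,
    Matrix.head_cons, Matrix.tail_cons, abs_mul, abs_exp, hprod, and_assoc]

lemma sub_lt_one_of_exp_mul_lt {a b x : ℝ} (ha : exp a * x < 1 / 2)
    (hb : 1 / (2 * exp 1) < exp b * x) : a - b < 1 := by
  have hx : 0 < x := pos_of_mul_pos_right (lt_trans (by positivity) hb) (exp_pos b).le
  have : exp a < exp (1 + b) := by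
    rw [div_lt_iff₀ (by positivity)] at hb
    rw [exp_add]
    nlinarith
  linarith [exp_lt_exp.mp this]

lemma abs_sub_lt_one_of_mem_aMat_inv_image_Delta {s t s' t' ε : ℝ} {v : Fin 3 → ℝ}
    (h : v ∈ (fun w => (aMat s t)⁻¹ *ᵥ w) '' Delta ε)
    (h' : v ∈ (fun w => (aMat s' t')⁻¹ *ᵥ w) '' Delta ε) :
    |s - s'| < 1 ∧ |t - t'| < 1 := by
  obtain ⟨-, ⟨hs₁, hs₂⟩, ⟨ht₁, ht₂⟩, -⟩ := mem_aMat_inv_image_Delta_iff.mp h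
  obtain ⟨-, ⟨hs₁', hs₂'⟩, ⟨ht₁', ht₂'⟩, -⟩ := mem_aMat_inv_image_Delta_iff.mp h'
  exact ⟨abs_sub_lt_iff.mpr ⟨sub_lt_one_of_exp_mul_lt hs₂ hs₁', sub_lt_one_of_exp_mul_lt hs₂' hs₁⟩,
    abs_sub_lt_iff.mpr ⟨sub_lt_one_of_exp_mul_lt ht₂ ht₁', sub_lt_one_of_exp_mul_lt ht₂' ht₁⟩⟩

lemma Nat.eq_of_abs_sub_lt_one {m n : ℕ} (h : |(m : ℝ) - n| < 1) : m = n := by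
  obtain ⟨h₁, h₂⟩ := abs_sub_lt_iff.mp h
  have : m < n + 1 := by exact_mod_cast (by linarith : (m : ℝ) < n + 1)
  have : n < m + 1 := by exact_mod_cast (by linarith : (n : ℝ) < m + 1)
  omega

lemma aMat_inv_image_Delta_subset_Omega {s t T ε : ℝ} (hs : 0 ≤ s) (ht : 0 ≤ t)
    (hst : s + t ≤ 2 * T) : (fun w => (aMat s t)⁻¹ *ᵥ w) '' Delta ε ⊆ Omega T ε := by
  intro v hv
  obtain ⟨⟨hy₁, hy₂⟩, ⟨hs₁, hs₂⟩, ⟨ht₁, ht₂⟩, hprod⟩ := mem_aMat_inv_image_Delta_iff.mp hv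
  have hy : v 0 < exp (2 * T) := by
    calc v 0 < exp (s + t) := by
          rwa [show -s - t = -(s + t) by ring, exp_neg, inv_mul_lt_iff₀ (exp_pos _), mul_one] at hy₂
      _ ≤ exp (2 * T) := exp_le_exp.mpr hst
  have hlt {r x : ℝ} (hr : 0 ≤ r) (h : exp r * x < 1 / 2) : x < 1 / 2 := by
    nlinarith [one_le_exp hr]
  refine ⟨pos_of_mul_pos_right hy₁ (exp_pos _).le, hy, ?_, hlt hs hs₂, ?_, hlt ht ht₂, hprod⟩
  · exact pos_of_mul_pos_right (lt_trans (by positivity) hs₁) (exp_pos _).le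
  · exact pos_of_mul_pos_right (lt_trans (by positivity) ht₁) (exp_pos _).le

theorem stmt10_general (ε : ℝ) (T : ℝ) (hT : 1 < T) :
    (∀ p q : ℕ × ℕ, p ≠ q →
      Disjoint ((fun w => (aMat p.1 p.2)⁻¹.mulVec w) '' Delta ε)
        ((fun w => (aMat q.1 q.2)⁻¹.mulVec w) '' Delta ε)) ∧
    (⋃ p ∈ {p : ℕ × ℕ | p.1 ≤ ⌊T⌋₊ ∧ p.2 ≤ ⌊T⌋₊},
      (fun w => (aMat p.1 p.2)⁻¹.mulVec w) '' Delta ε) ⊆ Omega T ε := by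
  refine ⟨fun p q hpq => disjoint_left.mpr fun v hp hq => hpq ?_, iUnion₂_subset fun p hp => ?_⟩
  · obtain ⟨h₁, h₂⟩ := abs_sub_lt_one_of_mem_aMat_inv_image_Delta hp hq
    exact Prod.ext (Nat.eq_of_abs_sub_lt_one h₁) (Nat.eq_of_abs_sub_lt_one h₂)
  · have hfloor : (⌊T⌋₊ : ℝ) ≤ T := Nat.floor_le (by linarith)
    have h₁ : (p.1 : ℝ) ≤ ⌊T⌋₊ := by exact_mod_cast hp.1
    have h₂ : (p.2 : ℝ) ≤ ⌊T⌋₊ := by exact_mod_cast hp.2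
    exact aMat_inv_image_Delta_subset_Omega (Nat.cast_nonneg _) (Nat.cast_nonneg _) (by linarith)

theorem stmt10 (ε : ℝ) (hε0 : 0 < ε) (hε1 : ε < 1) (T : ℝ) (hT : 1 < T) :
    (∀ p q : ℕ × ℕ, p ≠ q →
      Disjoint ((fun w => (aMat p.1 p.2)⁻¹.mulVec w) '' Delta ε)
        ((fun w => (aMat q.1 q.2)⁻¹.mulVec w) '' Delta ε)) ∧
    (⋃ p ∈ {p : ℕ × ℕ | p.1 ≤ ⌊T⌋₊ ∧ p.2 ≤ ⌊T⌋₊},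
      (fun w => (aMat p.1 p.2)⁻¹.mulVec w) '' Delta ε) ⊆ Omega T ε :=
  stmt10_general ε T hT
end

section
/- Let α, β ∈ ℝ \ ℚ, 0 < ε < 1/2, and let 𝐧 = (n, m₁, m₂) ∈ ℤ³ \ {0}. Define d_{ε,𝐧} = { (s,t) ∈ ℝ² : ‖a_{s,t}·τ_{α,β}·𝐧‖_∞ ≤ ε }. If d_{ε,𝐧} ∩ ℝ_{≥0}² ≠ ∅, then n ≠ 0 and d_{ε,𝐧} = { (s,t) ∈ ℝ² : s ≤ log(ε/|nα+m₁|), t ≤ log(ε/|nβ+m₂|), s+t ≥ log(|n|/ε) }; in particular d_{ε,𝐧} is an isosceles right triangle whose legs have length log( ε³ / (|n|·|nα+m₁|·|nβ+m₂|) ). -/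
/-!
In coordinates, `a_{s,t} τ_{α,β} 𝐧 = (e^{-s-t} n, e^s (nα + m₁), e^t (nβ + m₂))`, so the sup-norm
condition splits into three conditions, each of which becomes a half-plane after taking logarithms.
The logarithms make sense once all three coefficients are nonzero: a point with `s, t ≥ 0` rules
out `n = 0`, since then some `mᵢ` is a nonzero integer and `e^s |mᵢ| ≥ 1 > ε`; for `n ≠ 0`
irrationality of `α` and `β` does the rest.
-/

open Filter MeasureTheory Matrix

/-- `d_{ε,𝐧} = {(s,t) ∈ ℝ² : ‖a_{s,t} τ_{α,β} 𝐧‖_∞ ≤ ε}`. -/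
noncomputable def dSet (α β ε : ℝ) (v : Fin 3 → ℤ) : Set (ℝ × ℝ) :=
  {p | ‖(aMat p.1 p.2 * tauMat α β).mulVec (fun i => (v i : ℝ))‖ ≤ ε}

lemma mulVec_aMat_tauMat (α β s t : ℝ) (n m₁ m₂ : ℤ) :
    (aMat s t * tauMat α β).mulVec (fun i => ((![n, m₁, m₂] : Fin 3 → ℤ) i : ℝ)) =
      ![Real.exp (-s - t) * n, Real.exp s * (n * α + m₁), Real.exp t * (n * β + m₂)] := by
  funext i
  fin_cases i <;>
    simp [aMat, tauMat, Matrix.mulVec, Matrix.mul_apply, Fin.sum_univ_three, dotProduct] <;> ring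

lemma mem_dSet_iff {α β ε : ℝ} (hε : 0 ≤ ε) {n m₁ m₂ : ℤ} {p : ℝ × ℝ} :
    p ∈ dSet α β ε ![n, m₁, m₂] ↔
      Real.exp (-p.1 - p.2) * |(n : ℝ)| ≤ ε ∧
      Real.exp p.1 * |(n : ℝ) * α + m₁| ≤ ε ∧
      Real.exp p.2 * |(n : ℝ) * β + m₂| ≤ ε := by
  rw [dSet, Set.mem_ofPred_eq, mulVec_aMat_tauMat, pi_norm_le_iff_of_nonneg hε]
  simp [Fin.forall_fin_succ, abs_mul, Real.abs_exp]

lemma Real.exp_mul_le_iff_le_log_div {x a ε : ℝ} (ha : 0 < a) (hε : 0 < ε) :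
    Real.exp x * a ≤ ε ↔ x ≤ Real.log (ε / a) := by
  rw [Real.le_log_iff_exp_le (div_pos hε ha), le_div_iff₀ ha]

lemma Real.exp_neg_mul_le_iff_log_div_le {x a ε : ℝ} (ha : 0 < a) (hε : 0 < ε) :
    Real.exp (-x) * a ≤ ε ↔ Real.log (a / ε) ≤ x := by
  rw [Real.log_le_iff_le_exp (div_pos ha hε), div_le_iff₀ hε, Real.exp_neg,
    inv_mul_le_iff₀ (Real.exp_pos x), mul_comm]

lemma Int.eq_zero_of_exp_mul_abs_le {m : ℤ} {s ε : ℝ} (hs : 0 ≤ s) (hε : ε < 1)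
    (h : Real.exp s * |(m : ℝ)| ≤ ε) : m = 0 := by
  by_contra hm
  have hm1 : (1 : ℝ) ≤ |(m : ℝ)| := by exact_mod_cast Int.one_le_abs hm
  nlinarith [Real.one_le_exp hs]

lemma abs_intCast_mul_add_intCast_pos {α : ℝ} (hα : Irrational α) {n : ℤ} (hn : n ≠ 0) (m : ℤ) :
    0 < |(n : ℝ) * α + m| :=
  abs_pos.2 ((hα.intCast_mul hn).add_intCast m).ne_zero

theorem stmt15 (α β : ℝ) (hα : Irrational α) (hβ : Irrational β)
    (ε : ℝ) (hε0 : 0 < ε) (hε1 : ε < 1 / 2) (n m₁ m₂ : ℤ)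
    (hv : (![n, m₁, m₂] : Fin 3 → ℤ) ≠ 0)
    (hne : (dSet α β ε ![n, m₁, m₂] ∩ {p : ℝ × ℝ | 0 ≤ p.1 ∧ 0 ≤ p.2}).Nonempty) :
    n ≠ 0 ∧
      dSet α β ε ![n, m₁, m₂] =
        {p : ℝ × ℝ | p.1 ≤ Real.log (ε / |(n : ℝ) * α + m₁|) ∧
          p.2 ≤ Real.log (ε / |(n : ℝ) * β + m₂|) ∧
          Real.log (|(n : ℝ)| / ε) ≤ p.1 + p.2} := by
  obtain ⟨p, hp, hs, ht⟩ := hne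
  obtain ⟨-, h₁, h₂⟩ := (mem_dSet_iff hε0.le).1 hp
  have hn : n ≠ 0 := by
    rintro rfl
    simp only [Int.cast_zero, zero_mul, zero_add] at h₁ h₂
    have hm₁ := Int.eq_zero_of_exp_mul_abs_le hs (by linarith) h₁
    have hm₂ := Int.eq_zero_of_exp_mul_abs_le ht (by linarith) h₂
    exact hv (by simp [hm₁, hm₂])
  refine ⟨hn, Set.ext fun q => ?_⟩
  rw [mem_dSet_iff hε0.le, Set.mem_ofPred_eq, sub_eq_add_neg, ← neg_add,
    Real.exp_neg_mul_le_iff_log_div_le (abs_pos.2 (Int.cast_ne_zero.2 hn)) hε0,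
    Real.exp_mul_le_iff_le_log_div (abs_intCast_mul_add_intCast_pos hα hn m₁) hε0,
    Real.exp_mul_le_iff_le_log_div (abs_intCast_mul_add_intCast_pos hβ hn m₂) hε0]
  tauto
end
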